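/- arXiv:1610.04070 — 4 statements merged into one kernel-verified Lean document; each statement's English description precedes it below -/
import Mathlib

section
/- Let d ≥ 1, let p > 1 and α > 0 be real numbers, let c ∈ ℝ, and let M be an invertible real d×d matrix. Then the two conditions M⁻¹·M⁻ᵀ = c·I and M⁻¹e₁ = α^{p−1}c·e₁ (where e₁ is the first standard basis vector) hold simultaneously if and only if c = α^{2−2p} and M = α^{p−1}·O for some orthogonal d×d matrix O with O·e₁ = e₁. -/
/-!
With `β = α^(p-1)`, the condition `M⁻¹M⁻ᵀ = c·I` says `(MᵀM)⁻¹ = c·I`, i.e. `MᵀM = c⁻¹·I`, and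
`M⁻¹e₁ = βc·e₁` says `Me₁ = (βc)⁻¹e₁`. Evaluating the quadratic form of `MᵀM` at `e₁` gives
`c⁻¹ = (βc)⁻²`, hence `c = β⁻²`; then `β⁻¹M` is orthogonal and fixes `e₁`. The converse is a
direct computation.
-/

open Matrix

namespace Matrix

variable {n K : Type*} [Fintype n] [DecidableEq n] [Field K] {M : Matrix n n K}

theorem inv_eq_iff_eq_nonsing_inv {A B : Matrix n n K} (hA : IsUnit A) : A⁻¹ = B ↔ A = B⁻¹ := by
  have hA' := (isUnit_iff_isUnit_det A).mp hA
  constructor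
  · rintro rfl
    exact (nonsing_inv_nonsing_inv A hA').symm
  · rintro rfl
    exact nonsing_inv_nonsing_inv B (isUnit_nonsing_inv_det_iff.mp hA')

theorem inv_smul_one (c : K) : (c • (1 : Matrix n n K))⁻¹ = c⁻¹ • 1 := by
  rcases eq_or_ne c 0 with rfl | hc
  · simp
  · exact inv_eq_left_inv (by rw [smul_mul_smul_comm, inv_mul_cancel₀ hc, one_mul, one_smul])

theorem inv_mul_inv_transpose_eq_smul_one_iff (hM : IsUnit M) (c : K) :
    M⁻¹ * M⁻¹ᵀ = c • 1 ↔ Mᵀ * M = c⁻¹ • 1 := by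
  rw [transpose_nonsing_inv, ← mul_inv_rev, inv_eq_iff_eq_nonsing_inv, inv_smul_one]
  exact ((isUnit_transpose M).mpr hM).mul hM

theorem mulVec_eq_inv_smul_of_inv_mulVec_eq_smul (hM : IsUnit M.det) {v : n → K} {k : K}
    (h : M⁻¹ *ᵥ v = k • v) : M *ᵥ v = k⁻¹ • v := by
  have hv : v = k • M *ᵥ v := by
    rw [← mulVec_smul, ← h, mulVec_mulVec, mul_nonsing_inv M hM, one_mulVec]
  rcases eq_or_ne k 0 with rfl | hk
  · rw [zero_smul] at hv
    rw [hv, mulVec_zero, smul_zero]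
  · rw [eq_inv_smul_iff₀ hk]
    exact hv.symm

theorem inv_mulVec_eq_smul_iff (hM : IsUnit M) (v : n → K) (k : K) :
    M⁻¹ *ᵥ v = k • v ↔ M *ᵥ v = k⁻¹ • v := by
  have hM' := (isUnit_iff_isUnit_det M).mp hM
  refine ⟨mulVec_eq_inv_smul_of_inv_mulVec_eq_smul hM', fun h => ?_⟩
  have h' := mulVec_eq_inv_smul_of_inv_mulVec_eq_smul (v := v) (k := k⁻¹)
    (isUnit_nonsing_inv_det M hM')
  rw [nonsing_inv_nonsing_inv M hM', inv_inv] at h'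
  exact h' h

theorem eq_sq_of_transpose_mul_self_eq_smul_one {a b : K} {e : n → K}
    (hMM : Mᵀ * M = a • 1) (hMe : M *ᵥ e = b • e) (he : e ⬝ᵥ e ≠ 0) : a = b ^ 2 := by
  have : a * (e ⬝ᵥ e) = b ^ 2 * (e ⬝ᵥ e) := calc
    a * (e ⬝ᵥ e) = e ⬝ᵥ (Mᵀ * M) *ᵥ e := by
      rw [hMM, smul_mulVec, one_mulVec, dotProduct_smul, smul_eq_mul]
    _ = (M *ᵥ e) ⬝ᵥ (M *ᵥ e) := by
      rw [← mulVec_mulVec, dotProduct_mulVec, ← mulVec_transpose, transpose_transpose]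
    _ = b ^ 2 * (e ⬝ᵥ e) := by
      rw [hMe, smul_dotProduct, dotProduct_smul, smul_eq_mul, smul_eq_mul]
      ring
  exact mul_right_cancel₀ he this

theorem inv_mul_inv_transpose_eq_and_inv_mulVec_eq_iff (hM : IsUnit M) {β c : K} (hβ : β ≠ 0)
    {e : n → K} (he : e ⬝ᵥ e ≠ 0) :
    (M⁻¹ * M⁻¹ᵀ = c • 1 ∧ M⁻¹ *ᵥ e = (β * c) • e) ↔
      (c = (β ^ 2)⁻¹ ∧ ∃ O ∈ orthogonalGroup n K, M = β • O ∧ O *ᵥ e = e) := by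
  rw [inv_mul_inv_transpose_eq_smul_one_iff hM, inv_mulVec_eq_smul_iff hM]
  constructor
  · rintro ⟨hMM, hMe⟩
    have hc0 : c ≠ 0 := by
      rintro rfl
      have : M *ᵥ e = M *ᵥ 0 := by simpa using hMe
      exact he (by rw [mulVec_injective_iff_isUnit.mpr hM this, zero_dotProduct])
    have hc : c = (β ^ 2)⁻¹ := by
      have hsq := eq_sq_of_transpose_mul_self_eq_smul_one hMM hMe he
      field_simp at hsq ⊢
      exact hsq
    subst hc
    refine ⟨rfl, β⁻¹ • M, ?_, by rw [smul_smul, mul_inv_cancel₀ hβ, one_smul], ?_⟩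
    · rw [mem_orthogonalGroup_iff', transpose_smul, smul_mul_smul_comm, hMM, smul_smul, inv_inv,
        show β⁻¹ * β⁻¹ * β ^ 2 = 1 by field_simp, one_smul]
    · rw [smul_mulVec, hMe, smul_smul, show β⁻¹ * (β * (β ^ 2)⁻¹)⁻¹ = 1 by field_simp, one_smul]
  · rintro ⟨rfl, O, hO, rfl, hOe⟩
    rw [mem_orthogonalGroup_iff'] at hO
    constructor
    · rw [transpose_smul, smul_mul_smul_comm, hO, inv_inv, pow_two]
    · rw [smul_mulVec, hOe, show (β * (β ^ 2)⁻¹)⁻¹ = β by field_simp]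

end Matrix

theorem stmt_0_general (d : ℕ) (hd : 1 ≤ d) (p α c : ℝ) (hα : 0 < α)
    (M : Matrix (Fin d) (Fin d) ℝ) (hM : IsUnit M) :
    (M⁻¹ * (M⁻¹)ᵀ = c • (1 : Matrix (Fin d) (Fin d) ℝ) ∧
        M⁻¹.mulVec (Pi.single (⟨0, hd⟩ : Fin d) 1 : Fin d → ℝ) =
          (α ^ (p - 1) * c) • (Pi.single (⟨0, hd⟩ : Fin d) 1 : Fin d → ℝ)) ↔
      (c = α ^ (2 - 2 * p) ∧
        ∃ O ∈ Matrix.orthogonalGroup (Fin d) ℝ,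
          M = α ^ (p - 1) • O ∧
            O.mulVec (Pi.single (⟨0, hd⟩ : Fin d) 1 : Fin d → ℝ) =
              (Pi.single (⟨0, hd⟩ : Fin d) 1 : Fin d → ℝ)) := by
  have hexp : α ^ (2 - 2 * p) = ((α ^ (p - 1)) ^ 2)⁻¹ := by
    rw [← Real.rpow_natCast, ← Real.rpow_mul hα.le, ← Real.rpow_neg hα.le]
    congr 1
    push_cast
    ring
  rw [hexp]
  exact inv_mul_inv_transpose_eq_and_inv_mulVec_eq_iff hM (Real.rpow_pos_of_pos hα _).ne' (by simp)

/-- The matrix conditions `M⁻¹ M⁻ᵀ = c I` and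
`M⁻¹ e₁ = α^(p-1) c e₁` hold iff `c = α^(2-2p)` and `M = α^(p-1) O` for some
orthogonal `O` fixing `e₁`. -/
theorem stmt_0 (d : ℕ) (hd : 1 ≤ d) (p α c : ℝ) (hp : 1 < p) (hα : 0 < α)
    (M : Matrix (Fin d) (Fin d) ℝ) (hM : IsUnit M) :
    (M⁻¹ * (M⁻¹)ᵀ = c • (1 : Matrix (Fin d) (Fin d) ℝ) ∧
        M⁻¹.mulVec (Pi.single (⟨0, hd⟩ : Fin d) 1 : Fin d → ℝ) =
          (α ^ (p - 1) * c) • (Pi.single (⟨0, hd⟩ : Fin d) 1 : Fin d → ℝ)) ↔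
      (c = α ^ (2 - 2 * p) ∧
        ∃ O ∈ Matrix.orthogonalGroup (Fin d) ℝ,
          M = α ^ (p - 1) • O ∧
            O.mulVec (Pi.single (⟨0, hd⟩ : Fin d) 1 : Fin d → ℝ) =
              (Pi.single (⟨0, hd⟩ : Fin d) 1 : Fin d → ℝ)) :=
  stmt_0_general d hd p α c hα M hM
end

section
/- Let n ≥ 1, let a ∈ ℝ, let S be a skew-symmetric real n×n matrix, let v₁ ∈ ℝ, and let v₂ ∈ ℝⁿ. Consider the real (n+2)×(n+2) block matrix m with blocks m = [[a, 0, v₁], [0, a·Iₙ + S, v₂], [0, 0, 0]] (first block of size 1×1, middle block n×n, last block 1×1). Then its matrix exponential is exp(m) = [[e^a, 0, Σ_{k=0}^∞ a^k v₁/(k+1)!], [0, e^a·exp(S), Σ_{k=0}^∞ (a·Iₙ+S)^k v₂/(k+1)!], [0, 0, 1]]. -/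
/-!
With `B = a • 1 + S`, the last row of `m` vanishes, so
`m ^ (k + 1) = [[a ^ (k + 1), 0, a ^ k v₁], [0, B ^ (k + 1), B ^ k v₂], [0, 0, 0]]`.
Summing the exponential series block by block gives `e ^ a` and `exp B = e ^ a • exp S`
(as `a • 1` commutes with `S`) on the diagonal, and `∑ (k + 1)!⁻¹ a ^ k v₁`,
`∑ (k + 1)!⁻¹ B ^ k v₂` in the last column. These last two series converge because they are
entries of the convergent exponential series of `m`.
-/

open scoped Nat Matrix

/-- The `(n+2)×(n+2)` block matrix `[[a, 0, v₁], [0, B, v₂], [0, 0, c]]` with a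
`1×1` block, an `n×n` block and a `1×1` block on the diagonal. -/
def blk3 (n : ℕ) (a : ℝ) (B : Matrix (Fin n) (Fin n) ℝ) (v₁ : ℝ)
    (v₂ : Fin n → ℝ) (c : ℝ) :
    Matrix (Unit ⊕ Fin n ⊕ Unit) (Unit ⊕ Fin n ⊕ Unit) ℝ :=
  Matrix.of fun i j =>
    match i, j with
    | Sum.inl _, Sum.inl _ => a
    | Sum.inl _, Sum.inr (Sum.inl _) => 0
    | Sum.inl _, Sum.inr (Sum.inr _) => v₁
    | Sum.inr (Sum.inl _), Sum.inl _ => 0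
    | Sum.inr (Sum.inl i), Sum.inr (Sum.inl j) => B i j
    | Sum.inr (Sum.inl i), Sum.inr (Sum.inr _) => v₂ i
    | Sum.inr (Sum.inr _), Sum.inl _ => 0
    | Sum.inr (Sum.inr _), Sum.inr (Sum.inl _) => 0
    | Sum.inr (Sum.inr _), Sum.inr (Sum.inr _) => c

open NormedSpace

theorem Matrix.exp_series_hasSum_exp' {m 𝕂 : Type*} [Fintype m] [DecidableEq m] [RCLike 𝕂]
    (A : Matrix m m 𝕂) : HasSum (fun k => (k !⁻¹ : 𝕂) • A ^ k) (exp A) := by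
  open scoped Norms.Operator in exact NormedSpace.exp_series_hasSum_exp' A

theorem HasSum.expSeries_succ {A : Type*} [Ring A] [TopologicalSpace A]
    [IsTopologicalAddGroup A] [Module ℝ A] {x y : A}
    (h : HasSum (fun k => (k !⁻¹ : ℝ) • x ^ k) y) :
    HasSum (fun k => ((k + 1)! : ℝ)⁻¹ • x ^ (k + 1)) (y - 1) := by
  simpa using (hasSum_nat_add_iff' 1).2 h

theorem Matrix.exp_smul_one_add {m : Type*} [Fintype m] [DecidableEq m] (a : ℝ)
    (S : Matrix m m ℝ) : exp (a • 1 + S) = Real.exp a • exp S := by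
  rw [Matrix.exp_add_of_commute _ _ ((Commute.one_left S).smul_left a), smul_one_eq_diagonal,
    Matrix.exp_diagonal, Pi.exp_def, ← Real.exp_eq_exp_ℝ, ← smul_one_eq_diagonal,
    smul_one_mul]

section

variable {n : ℕ}

theorem blk3_one :
    (1 : Matrix (Unit ⊕ Fin n ⊕ Unit) (Unit ⊕ Fin n ⊕ Unit) ℝ) = blk3 n 1 1 0 0 1 := by
  ext (_ | i | _) (_ | j | _) <;> simp [blk3, Matrix.one_apply]

theorem blk3_add (a a' v₁ v₁' c c' : ℝ) (B B' : Matrix (Fin n) (Fin n) ℝ)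
    (v₂ v₂' : Fin n → ℝ) :
    blk3 n a B v₁ v₂ c + blk3 n a' B' v₁' v₂' c' =
      blk3 n (a + a') (B + B') (v₁ + v₁') (v₂ + v₂') (c + c') := by
  ext (_ | i | _) (_ | j | _) <;> simp [blk3]

theorem blk3_smul (r a v₁ c : ℝ) (B : Matrix (Fin n) (Fin n) ℝ) (v₂ : Fin n → ℝ) :
    r • blk3 n a B v₁ v₂ c = blk3 n (r * a) (r • B) (r * v₁) (r • v₂) (r * c) := by
  ext (_ | i | _) (_ | j | _) <;> simp [blk3]

theorem blk3_mul (a a' v₁ v₁' c c' : ℝ) (B B' : Matrix (Fin n) (Fin n) ℝ)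
    (v₂ v₂' : Fin n → ℝ) :
    blk3 n a B v₁ v₂ c * blk3 n a' B' v₁' v₂' c' =
      blk3 n (a * a') (B * B') (a * v₁' + v₁ * c') (B *ᵥ v₂' + c' • v₂) (c * c') := by
  ext (_ | i | _) (_ | j | _) <;>
    simp [blk3, Matrix.mul_apply, Fintype.sum_sum_type, Matrix.mulVec, dotProduct, mul_comm]

theorem blk3_pow_succ (a v₁ : ℝ) (B : Matrix (Fin n) (Fin n) ℝ) (v₂ : Fin n → ℝ)
    (k : ℕ) :
    blk3 n a B v₁ v₂ 0 ^ (k + 1) =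
      blk3 n (a ^ (k + 1)) (B ^ (k + 1)) (a ^ k * v₁) (B ^ k *ᵥ v₂) 0 := by
  induction k with
  | zero => simp
  | succ k ih => simp [pow_succ _ (k + 1), ih, blk3_mul, pow_succ, mul_comm]

variable {ι : Type*} {α γ ε : ι → ℝ} {β : ι → Matrix (Fin n) (Fin n) ℝ}
  {δ : ι → Fin n → ℝ}

theorem HasSum.blk3 {a v₁ c : ℝ} {B : Matrix (Fin n) (Fin n) ℝ} {v₂ : Fin n → ℝ}
    (hα : HasSum α a) (hβ : HasSum β B) (hγ : HasSum γ v₁) (hδ : HasSum δ v₂)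
    (hε : HasSum ε c) :
    HasSum (fun k => blk3 n (α k) (β k) (γ k) (δ k) (ε k)) (blk3 n a B v₁ v₂ c) :=
  Pi.hasSum.2 fun i => Pi.hasSum.2 fun j => by
    rcases i with _ | i | _ <;> rcases j with _ | j | _ <;>
      simp only [_root_.blk3, Matrix.of_apply]
    all_goals first
      | exact hasSum_zero | assumption
      | exact Pi.hasSum.1 hδ i | exact Pi.hasSum.1 (Pi.hasSum.1 hβ i) j

theorem summable_blk3_iff :
    Summable (fun k => blk3 n (α k) (β k) (γ k) (δ k) (ε k)) ↔
      Summable α ∧ Summable β ∧ Summable γ ∧ Summable δ ∧ Summable ε := by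
  refine ⟨fun h => ?_, fun ⟨hα, hβ, hγ, hδ, hε⟩ =>
    (hα.hasSum.blk3 hβ.hasSum hγ.hasSum hδ.hasSum hε.hasSum).summable⟩
  have entry := fun i j => Pi.summable.1 (Pi.summable.1 h i) j
  exact ⟨entry (.inl ()) (.inl ()),
    Pi.summable.2 fun i => Pi.summable.2 fun j => entry (.inr (.inl i)) (.inr (.inl j)),
    entry (.inl ()) (.inr (.inr ())),
    Pi.summable.2 fun i => entry (.inr (.inl i)) (.inr (.inr ())),
    entry (.inr (.inr ())) (.inr (.inr ()))⟩

end

theorem stmt_12_general (n : ℕ) (a v₁ : ℝ) (S : Matrix (Fin n) (Fin n) ℝ)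
    (v₂ : Fin n → ℝ) :
    NormedSpace.exp
        (blk3 n a (a • (1 : Matrix (Fin n) (Fin n) ℝ) + S) v₁ v₂ 0) =
      blk3 n (Real.exp a) (Real.exp a • NormedSpace.exp S)
        (∑' k : ℕ, a ^ k * v₁ / ((k + 1)! : ℝ))
        (∑' k : ℕ, (((k + 1)! : ℝ))⁻¹ •
          ((a • (1 : Matrix (Fin n) (Fin n) ℝ) + S) ^ k).mulVec v₂)
        1 := by
  set B := a • (1 : Matrix (Fin n) (Fin n) ℝ) + S
  have hseries := (Matrix.exp_series_hasSum_exp' (blk3 n a B v₁ v₂ 0)).expSeries_succ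
  simp only [blk3_pow_succ, blk3_smul, mul_zero, inv_mul_eq_div] at hseries
  obtain ⟨-, -, hγ, hδ, -⟩ := summable_blk3_iff.1 hseries.summable
  have hblocks := (Real.exp_eq_exp_ℝ ▸ NormedSpace.exp_series_hasSum_exp' a).expSeries_succ.blk3
    (Matrix.exp_series_hasSum_exp' B).expSeries_succ hγ.hasSum hδ.hasSum hasSum_zero
  simp only [smul_eq_mul, inv_mul_eq_div] at hblocks
  rw [sub_eq_iff_eq_add.1 (hseries.unique hblocks), blk3_one, blk3_add, Matrix.exp_smul_one_add]
  simp only [sub_add_cancel, add_zero, zero_add]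

/-- Explicit matrix exponential of the Lie-algebra element
`m = [[a, 0, v₁], [0, aI+S, v₂], [0, 0, 0]]` with `S` skew-symmetric:
`exp m = [[e^a, 0, Σ a^k v₁/(k+1)!], [0, e^a exp S, Σ (aI+S)^k v₂/(k+1)!], [0,0,1]]`. -/
theorem stmt_12 (n : ℕ) (hn : 1 ≤ n) (a v₁ : ℝ) (S : Matrix (Fin n) (Fin n) ℝ)
    (hS : Sᵀ = -S) (v₂ : Fin n → ℝ) :
    NormedSpace.exp
        (blk3 n a (a • (1 : Matrix (Fin n) (Fin n) ℝ) + S) v₁ v₂ 0) =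
      blk3 n (Real.exp a) (Real.exp a • NormedSpace.exp S)
        (∑' k : ℕ, a ^ k * v₁ / ((k + 1)! : ℝ))
        (∑' k : ℕ, (((k + 1)! : ℝ))⁻¹ •
          ((a • (1 : Matrix (Fin n) (Fin n) ℝ) + S) ^ k).mulVec v₂)
        1 :=
  stmt_12_general n a v₁ S v₂
end

section
/- Let p > 1, ν ∈ ℝ, T̂ ∈ (0,∞], T ∈ (0,∞]. Let μ₁, μ₃ : [0,T̂) → ℝ be continuous; let α, b : [0,T̂) → ℝ be continuously differentiable with α(0)=1, b(0)=0, α' = α·μ₁, b' = α^{p−1}·μ₃, and α > 0 on [0,T̂); let σ : [0,T) → [0,T̂) be continuously differentiable with σ(0)=0 and σ'(t) = α(σ(t))^{2−2p}. Let v : ℝ × [0,T̂) → ℝ have continuous partial derivatives v_ξ, v_{ξξ}, v_τ (jointly continuous, v continuously differentiable in (ξ,τ)), and suppose v satisfies the co-moving equation v_τ(ξ,τ) = ν·v_{ξξ}(ξ,τ) − |v(ξ,τ)|^{p−1}·sgn(v(ξ,τ))·v_ξ(ξ,τ) + μ₁(τ)·(v(ξ,τ) + (p−1)·ξ·v_ξ(ξ,τ))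 + μ₃(τ)·v_ξ(ξ,τ) for all ξ ∈ ℝ, τ ∈ (0,T̂). Then the function u(x,t) = α(σ(t))⁻¹ · v(α(σ(t))^{1−p}·(x − b(σ(t))), σ(t)) satisfies the one-dimensional generalized Burgers' equation u_t(x,t) = ν·u_{xx}(x,t) − |u(x,t)|^{p−1}·sgn(u(x,t))·u_x(x,t) for all x ∈ ℝ and t ∈ (0,T). -/
/-!
Write `u = α(σ)⁻¹ v(ξ, σ)` with the co-moving coordinate `ξ = α(σ)^(1-p) (x - b(σ))`.
Each spatial derivative of `u` produces a factor `α^(1-p)`, and the nonlinearity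
`|u|^(p-1) sgn u` scales by the same factor. Since `v` has continuous partial derivatives the
chain rule applies in time; with `σ' = α(σ)^(2-2p)` and the reconstruction ODEs it gives
`u_t = α^(2-2p) α⁻¹ (v_τ - μ₁ (v + (p-1) ξ v_ξ) - μ₃ v_ξ)`, which the co-moving equation turns
into `α^(2-2p) α⁻¹ (ν v_ξξ - |v|^(p-1) sgn v · v_ξ)`, the right-hand side of Burgers' equation.
As `σ(0) = 0` and `σ' > 0`, the time `σ(t)` is positive, where the co-moving equation holds.
-/

/-- The half-open time interval `[0, T)`, where `T ∈ (0, ∞]` is an extended real. -/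
def tIval (T : EReal) : Set ℝ := {t : ℝ | 0 ≤ t ∧ (t : EReal) < T}

/-- The reconstruction of the original solution from the frozen profile `v`:
`u(x,t) = α(σ(t))⁻¹ v(α(σ(t))^(1−p)(x − b(σ(t))), σ(t))`. -/
noncomputable def reconU (p : ℝ) (α b σ : ℝ → ℝ) (v : ℝ → ℝ → ℝ) (x t : ℝ) : ℝ :=
  (α (σ t))⁻¹ * v (α (σ t) ^ (1 - p) * (x - b (σ t))) (σ t)

open Filter Topology

theorem hasDerivAt_uncurry_comp_of_partials {f f₁ f₂ : ℝ → ℝ → ℝ} {g : ℝ → ℝ} {g' t : ℝ}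
    (df₁ : ∀ᶠ q in 𝓝 (g t, t), HasDerivAt (f · q.2) (f₁ q.1 q.2) q.1)
    (df₂ : ∀ᶠ q in 𝓝 (g t, t), HasDerivAt (f q.1 ·) (f₂ q.1 q.2) q.2)
    (cf₁ : ContinuousAt (fun q : ℝ × ℝ => f₁ q.1 q.2) (g t, t))
    (cf₂ : ContinuousAt (fun q : ℝ × ℝ => f₂ q.1 q.2) (g t, t))
    (hg : HasDerivAt g g' t) :
    HasDerivAt (fun s => f (g s) s) (f₁ (g t) t * g' + f₂ (g t) t) t := by
  have hf := (hasStrictFDerivAt_uncurry_coprod (f := f)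
    (f₁ := fun x y => ContinuousLinearMap.toSpanSingleton ℝ (f₁ x y))
    (f₂ := fun x y => ContinuousLinearMap.toSpanSingleton ℝ (f₂ x y)) df₁ df₂
    (ContinuousLinearMap.toSpanSingletonCLE.continuous.continuousAt.comp cf₁)
    (ContinuousLinearMap.toSpanSingletonCLE.continuous.continuousAt.comp cf₂)).hasFDerivAt
  have := HasFDerivAt.comp_hasDerivAt (l := Function.uncurry f) (f := fun s => (g s, s)) t hf
    (hg.prodMk (hasDerivAt_id t))
  simpa [Function.comp_def, Function.HasUncurry.uncurry, mul_comm] using this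

theorem tIval_mem_nhds {T : EReal} {t : ℝ} (ht : 0 < t) (htT : (t : EReal) < T) :
    tIval T ∈ 𝓝 t :=
  mem_of_superset
    ((isOpen_Ioi.inter (isOpen_Iio.preimage continuous_coe_real_ereal)).mem_nhds ⟨ht, htT⟩)
    fun _ hs => ⟨le_of_lt hs.1, hs.2⟩

theorem convex_tIval (T : EReal) : Convex ℝ (tIval T) :=
  Set.OrdConnected.convex ⟨fun _ hx _ hy _ hz =>
    ⟨hx.1.trans hz.1, (EReal.coe_le_coe_iff.2 hz.2).trans_lt hy.2⟩⟩

theorem strictMonoOn_tIval_of_hasDerivWithinAt_pos {T : EReal} {f f' : ℝ → ℝ}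
    (hf : ∀ t ∈ tIval T, HasDerivWithinAt f (f' t) (tIval T) t)
    (hf' : ∀ t ∈ tIval T, 0 < f' t) : StrictMonoOn f (tIval T) :=
  strictMonoOn_of_hasDerivWithinAt_pos (convex_tIval T)
    (fun t ht => (hf t ht).continuousWithinAt)
    (fun t ht => (hf t (interior_subset ht)).mono interior_subset)
    (fun t ht => hf' t (interior_subset ht))

theorem Real.sign_pos_mul {c : ℝ} (hc : 0 < c) (z : ℝ) : Real.sign (c * z) = Real.sign z := by
  rcases lt_trichotomy z 0 with hz | rfl | hz
  · rw [Real.sign_of_neg hz, Real.sign_of_neg (mul_neg_of_pos_of_neg hc hz)]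
  · rw [mul_zero]
  · rw [Real.sign_of_pos hz, Real.sign_of_pos (mul_pos hc hz)]

theorem abs_inv_mul_rpow_mul_sign {a : ℝ} (ha : 0 < a) (q z : ℝ) :
    |a⁻¹ * z| ^ q * Real.sign (a⁻¹ * z) = a ^ (-q) * (|z| ^ q * Real.sign z) := by
  rw [Real.sign_pos_mul (inv_pos.2 ha), abs_mul, abs_of_pos (inv_pos.2 ha),
    Real.mul_rpow (inv_nonneg.2 ha.le) (abs_nonneg z), Real.inv_rpow ha.le,
    ← Real.rpow_neg ha.le, mul_assoc]

noncomputable def comovingCoord (p : ℝ) (α b : ℝ → ℝ) (x τ : ℝ) : ℝ := α τ ^ (1 - p) * (x - b τ)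

theorem hasDerivAt_comovingCoord {p m₁ m₃ x τ : ℝ} {α b : ℝ → ℝ}
    (hα : HasDerivAt α (α τ * m₁) τ) (hb : HasDerivAt b (α τ ^ (p - 1) * m₃) τ)
    (hpos : 0 < α τ) :
    HasDerivAt (comovingCoord p α b x) ((1 - p) * m₁ * comovingCoord p α b x τ - m₃) τ := by
  refine ((hα.rpow_const (Or.inl hpos.ne')).mul ((hasDerivAt_const τ x).sub hb)).congr_deriv ?_
  have hw : α τ ^ (1 - p) ≠ 0 := (Real.rpow_pos_of_pos hpos _).ne'
  simp only [comovingCoord, Pi.sub_apply, Real.rpow_sub_one hpos.ne',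
    show p - 1 = -(1 - p) by ring, Real.rpow_neg hpos.le]
  field_simp
  ring

theorem hasDerivAt_inv_mul_comp_comovingCoord {p m₁ m₃ x τ : ℝ} {α b : ℝ → ℝ}
    {v vξ vτ : ℝ → ℝ → ℝ} (hα : HasDerivAt α (α τ * m₁) τ)
    (hb : HasDerivAt b (α τ ^ (p - 1) * m₃) τ) (hpos : 0 < α τ)
    (hvξ : ∀ᶠ q in 𝓝 (comovingCoord p α b x τ, τ), HasDerivAt (v · q.2) (vξ q.1 q.2) q.1)
    (hvτ : ∀ᶠ q in 𝓝 (comovingCoord p α b x τ, τ), HasDerivAt (v q.1 ·) (vτ q.1 q.2) q.2)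
    (cvξ : ContinuousAt (fun q : ℝ × ℝ => vξ q.1 q.2) (comovingCoord p α b x τ, τ))
    (cvτ : ContinuousAt (fun q : ℝ × ℝ => vτ q.1 q.2) (comovingCoord p α b x τ, τ)) :
    HasDerivAt (fun τ => (α τ)⁻¹ * v (comovingCoord p α b x τ) τ)
      ((α τ)⁻¹ * (vτ (comovingCoord p α b x τ) τ - m₁ * v (comovingCoord p α b x τ) τ
        + ((1 - p) * m₁ * comovingCoord p α b x τ - m₃) * vξ (comovingCoord p α b x τ) τ)) τ := by
  have hv := hasDerivAt_uncurry_comp_of_partials hvξ hvτ cvξ cvτ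
    (hasDerivAt_comovingCoord (x := x) hα hb hpos)
  refine ((hα.inv hpos.ne').mul hv).congr_deriv ?_
  simp only [Pi.inv_apply]
  field_simp
  ring

theorem hasDerivAt_reconU_space {p t : ℝ} {α b σ : ℝ → ℝ} {v vξ : ℝ → ℝ → ℝ}
    (hv : ∀ ξ, HasDerivAt (v · (σ t)) (vξ ξ (σ t)) ξ) (y : ℝ) :
    HasDerivAt (fun y => reconU p α b σ v y t) (α (σ t) ^ (1 - p) * reconU p α b σ vξ y t) y := by
  have hξ := ((hasDerivAt_id y).sub_const (b (σ t))).const_mul (α (σ t) ^ (1 - p))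
  refine (((hv _).comp y hξ).const_mul (α (σ t))⁻¹).congr_deriv ?_
  simp only [reconU, id, mul_one]
  ring

theorem stmt_16_general (p ν : ℝ) (That T : EReal)
    (hT : 0 < T)
    (μ₁ μ₃ : ℝ → ℝ)
    (α b : ℝ → ℝ)
    (hαpos : ∀ τ ∈ tIval That, 0 < α τ)
    (hα' : ∀ τ ∈ tIval That, HasDerivWithinAt α (α τ * μ₁ τ) (tIval That) τ)
    (hb' : ∀ τ ∈ tIval That,
      HasDerivWithinAt b (α τ ^ (p - 1) * μ₃ τ) (tIval That) τ)
    (σ : ℝ → ℝ) (hσ0 : σ 0 = 0) (hσmem : ∀ t ∈ tIval T, σ t ∈ tIval That)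
    (hσ' : ∀ t ∈ tIval T,
      HasDerivWithinAt σ (α (σ t) ^ (2 - 2 * p)) (tIval T) t)
    (v vξ vξξ vτ : ℝ → ℝ → ℝ)
    (hvξ : ∀ (ξ : ℝ), ∀ τ ∈ tIval That,
      HasDerivAt (fun ξ' => v ξ' τ) (vξ ξ τ) ξ)
    (hvξξ : ∀ (ξ : ℝ), ∀ τ ∈ tIval That,
      HasDerivAt (fun ξ' => vξ ξ' τ) (vξξ ξ τ) ξ)
    (hvτ : ∀ (ξ : ℝ), ∀ τ ∈ tIval That,
      HasDerivWithinAt (fun τ' => v ξ τ') (vτ ξ τ) (tIval That) τ)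
    (hvξcont : ContinuousOn (fun q : ℝ × ℝ => vξ q.1 q.2)
      (Set.univ ×ˢ tIval That))
    (hvτcont : ContinuousOn (fun q : ℝ × ℝ => vτ q.1 q.2)
      (Set.univ ×ˢ tIval That))
    (hpde : ∀ (ξ τ : ℝ), 0 < τ → (τ : EReal) < That →
      vτ ξ τ = ν * vξξ ξ τ - |v ξ τ| ^ (p - 1) * Real.sign (v ξ τ) * vξ ξ τ
        + μ₁ τ * (v ξ τ + (p - 1) * ξ * vξ ξ τ) + μ₃ τ * vξ ξ τ) :
    ∀ (x t : ℝ), 0 < t → (t : EReal) < T →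
      deriv (fun s => reconU p α b σ v x s) t =
        ν * deriv (fun y => deriv (fun y' => reconU p α b σ v y' t) y) x
          - |reconU p α b σ v x t| ^ (p - 1) * Real.sign (reconU p α b σ v x t)
            * deriv (fun y => reconU p α b σ v y t) x := by
  intro x t ht htT
  have htmem : t ∈ tIval T := ⟨ht.le, htT⟩
  have hτ : σ t ∈ tIval That := hσmem t htmem
  have hτpos : 0 < σ t := by
    simpa [hσ0] using strictMonoOn_tIval_of_hasDerivWithinAt_pos hσ'
      (fun s hs => Real.rpow_pos_of_pos (hαpos _ (hσmem s hs)) _) ⟨le_rfl, hT⟩ htmem ht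
  have hτnhds := tIval_mem_nhds hτpos hτ.2
  have hapos := hαpos _ hτ
  set ξ := comovingCoord p α b x (σ t)
  have hnear : ∀ᶠ q : ℝ × ℝ in 𝓝 (ξ, σ t), tIval That ∈ 𝓝 q.2 :=
    (eventually_mem_nhds_iff.2 hτnhds).prod_inr_nhds ξ
  have hcont : Set.univ ×ˢ tIval That ∈ 𝓝 (ξ, σ t) := prod_mem_nhds univ_mem hτnhds
  have hut : HasDerivAt (fun s => reconU p α b σ v x s) _ t :=
    (hasDerivAt_inv_mul_comp_comovingCoord ((hα' _ hτ).hasDerivAt hτnhds)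
      ((hb' _ hτ).hasDerivAt hτnhds) hapos
      (hnear.mono fun q hq => hvξ q.1 q.2 (mem_of_mem_nhds hq))
      (hnear.mono fun q hq => (hvτ q.1 q.2 (mem_of_mem_nhds hq)).hasDerivAt hq)
      (hvξcont.continuousAt hcont) (hvτcont.continuousAt hcont)).comp t
      ((hσ' t htmem).hasDerivAt (tIval_mem_nhds ht htT))
  have hux := hasDerivAt_reconU_space (p := p) (α := α) (b := b) (t := t) (hvξ · _ hτ)
  have huxx := (hasDerivAt_reconU_space (p := p) (α := α) (b := b) (t := t)
    (hvξξ · _ hτ) x).const_mul (α (σ t) ^ (1 - p))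
  rw [hut.deriv, funext fun y => (hux y).deriv, huxx.deriv]
  beta_reduce
  have hrecon (f : ℝ → ℝ → ℝ) : reconU p α b σ f x t = (α (σ t))⁻¹ * f ξ (σ t) := rfl
  rw [hrecon v, hrecon vξ, hrecon vξξ, abs_inv_mul_rpow_mul_sign hapos, neg_sub,
    hpde _ _ hτpos hτ.2, show 2 - 2 * p = (1 - p) + (1 - p) by ring, Real.rpow_add hapos]
  ring

/-- (Freezing method, reconstruction direction.) If `v` solves
the co-moving equation
`v_τ = ν v_ξξ − |v|^(p−1) sgn(v) v_ξ + μ₁(v + (p−1)ξ v_ξ) + μ₃ v_ξ`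
and `α, b, σ` solve the reconstruction ODEs `α' = αμ₁`, `b' = α^(p−1)μ₃`,
`σ' = α(σ)^(2−2p)`, then `u(x,t) = α(σ(t))⁻¹ v(α(σ(t))^(1−p)(x−b(σ(t))), σ(t))`
solves the generalized Burgers' equation
`u_t = ν u_xx − |u|^(p−1) sgn(u) u_x`. -/
theorem stmt_16 (p ν : ℝ) (hp : 1 < p) (That T : EReal)
    (hThat : 0 < That) (hT : 0 < T)
    (μ₁ μ₃ : ℝ → ℝ)
    (hμ₁ : ContinuousOn μ₁ (tIval That)) (hμ₃ : ContinuousOn μ₃ (tIval That))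
    (α b : ℝ → ℝ) (hα0 : α 0 = 1) (hb0 : b 0 = 0)
    (hαpos : ∀ τ ∈ tIval That, 0 < α τ)
    (hα' : ∀ τ ∈ tIval That, HasDerivWithinAt α (α τ * μ₁ τ) (tIval That) τ)
    (hb' : ∀ τ ∈ tIval That,
      HasDerivWithinAt b (α τ ^ (p - 1) * μ₃ τ) (tIval That) τ)
    (σ : ℝ → ℝ) (hσ0 : σ 0 = 0) (hσmem : ∀ t ∈ tIval T, σ t ∈ tIval That)
    (hσ' : ∀ t ∈ tIval T,
      HasDerivWithinAt σ (α (σ t) ^ (2 - 2 * p)) (tIval T) t)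
    (v vξ vξξ vτ : ℝ → ℝ → ℝ)
    (hvξ : ∀ (ξ : ℝ), ∀ τ ∈ tIval That,
      HasDerivAt (fun ξ' => v ξ' τ) (vξ ξ τ) ξ)
    (hvξξ : ∀ (ξ : ℝ), ∀ τ ∈ tIval That,
      HasDerivAt (fun ξ' => vξ ξ' τ) (vξξ ξ τ) ξ)
    (hvτ : ∀ (ξ : ℝ), ∀ τ ∈ tIval That,
      HasDerivWithinAt (fun τ' => v ξ τ') (vτ ξ τ) (tIval That) τ)
    (hvcont : ContinuousOn (fun q : ℝ × ℝ => v q.1 q.2)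
      (Set.univ ×ˢ tIval That))
    (hvξcont : ContinuousOn (fun q : ℝ × ℝ => vξ q.1 q.2)
      (Set.univ ×ˢ tIval That))
    (hvξξcont : ContinuousOn (fun q : ℝ × ℝ => vξξ q.1 q.2)
      (Set.univ ×ˢ tIval That))
    (hvτcont : ContinuousOn (fun q : ℝ × ℝ => vτ q.1 q.2)
      (Set.univ ×ˢ tIval That))
    (hpde : ∀ (ξ τ : ℝ), 0 < τ → (τ : EReal) < That →
      vτ ξ τ = ν * vξξ ξ τ - |v ξ τ| ^ (p - 1) * Real.sign (v ξ τ) * vξ ξ τ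
        + μ₁ τ * (v ξ τ + (p - 1) * ξ * vξ ξ τ) + μ₃ τ * vξ ξ τ) :
    ∀ (x t : ℝ), 0 < t → (t : EReal) < T →
      deriv (fun s => reconU p α b σ v x s) t =
        ν * deriv (fun y => deriv (fun y' => reconU p α b σ v y' t) y) x
          - |reconU p α b σ v x t| ^ (p - 1) * Real.sign (reconU p α b σ v x t)
            * deriv (fun y => reconU p α b σ v y t) x :=
  stmt_16_general p ν That T hT μ₁ μ₃ α b hαpos hα' hb' σ hσ0 hσmem hσ' v vξ vξξ vτ hvξ hvξξ hvτ
    hvξcont hvτcont hpde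
end

section
/- Let p > 1, ν ∈ ℝ, μ₁ ∈ ℝ with μ₁ ≠ 0, and μ₃ ∈ ℝ. Let v̄ : ℝ → ℝ be twice continuously differentiable and satisfy the stationary co-moving equation 0 = ν·v̄''(ξ) − |v̄(ξ)|^{p−1}·sgn(v̄(ξ))·v̄'(ξ) + μ₁·(v̄(ξ) + (p−1)·ξ·v̄'(ξ)) + μ₃·v̄'(ξ) for all ξ ∈ ℝ. For real t with (2p−2)μ₁t + 1 > 0 define ᾱ(t) = ((2p−2)μ₁t + 1)^{1/(2p−2)} and b̄(t) = μ₃·(ᾱ(t)^{p−1} − 1)/((p−1)μ₁). Then the function u(x,t) = ᾱ(t)⁻¹·v̄(ᾱ(t)^{1−p}·(x − b̄(t))) satisfies u(x,0) = v̄(x) and solves the generalized Burgers' equation u_t(x,t) = ν·u_{xx}(x,t) − |u(x,t)|^{p−1}·sgn(u(x,t))·u_x(x,t) for all x ∈ ℝ and all t with (2p−2)μ₁t + 1 > 0. -/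
/-!
Write the candidate as `u(t) = a(α(t), b(t)) v̄`, where `a(α, b) v = α⁻¹ v(α^(1-p) (· - b))` is the
rescaling action (`rescale`). Both sides of Burgers' equation transform covariantly under it. The
Burgers field obeys `F(a(α, b) v) = α^(2-2p) a(α, b) (F v)`. Along any path with
`α' = μ₁ α^(3-2p)` and `b' = μ₃ α^(1-p)`, which is the ODE of the group path `exp(μ σ̄(t))` solved
by `ᾱ, b̄`, the time derivative is `α^(2-2p) a(α, b) (T v)`, where `T` is the infinitesimal
generator of the action in the direction `μ` (`scalingField`). The co-moving equation `F v̄ = T v̄`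
therefore makes the two sides agree.
-/

/-- The scaling `ᾱ(t) = ((2p−2)μ₁t + 1)^(1/(2p−2))` of a similarity solution. -/
noncomputable def simA (p μ₁ : ℝ) (t : ℝ) : ℝ :=
  ((2 * p - 2) * μ₁ * t + 1) ^ (1 / (2 * p - 2))

/-- The shift `b̄(t) = μ₃ (ᾱ(t)^(p−1) − 1)/((p−1)μ₁)` of a similarity solution. -/
noncomputable def simB (p μ₁ μ₃ : ℝ) (t : ℝ) : ℝ :=
  μ₃ * (simA p μ₁ t ^ (p - 1) - 1) / ((p - 1) * μ₁)

/-- The similarity solution `u(x,t) = ᾱ(t)⁻¹ v̄(ᾱ(t)^(1−p)(x − b̄(t)))`. -/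
noncomputable def simU (p μ₁ μ₃ : ℝ) (vbar : ℝ → ℝ) (x t : ℝ) : ℝ :=
  (simA p μ₁ t)⁻¹ * vbar (simA p μ₁ t ^ (1 - p) * (x - simB p μ₁ μ₃ t))

noncomputable def rescale (p α b : ℝ) (v : ℝ → ℝ) (x : ℝ) : ℝ :=
  α⁻¹ * v (α ^ (1 - p) * (x - b))

noncomputable def burgersField (ν p : ℝ) (v : ℝ → ℝ) (ξ : ℝ) : ℝ :=
  ν * deriv (deriv v) ξ - |v ξ| ^ (p - 1) * Real.sign (v ξ) * deriv v ξ

noncomputable def scalingField (p μ₁ μ₃ : ℝ) (v : ℝ → ℝ) (ξ : ℝ) : ℝ :=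
  -(μ₁ * (v ξ + (p - 1) * ξ * deriv v ξ) + μ₃ * deriv v ξ)

theorem Real.sign_mul_of_pos {c : ℝ} (hc : 0 < c) (r : ℝ) : Real.sign (c * r) = Real.sign r := by
  rcases lt_trichotomy r 0 with h | rfl | h
  · rw [Real.sign_of_neg h, Real.sign_of_neg (mul_neg_of_pos_of_neg hc h)]
  · simp
  · rw [Real.sign_of_pos h, Real.sign_of_pos (mul_pos hc h)]

section Rescale

variable {p α b : ℝ} {v : ℝ → ℝ}

theorem deriv_rescale (hv : Differentiable ℝ v) :
    deriv (rescale p α b v) = fun x => α ^ (1 - p) * rescale p α b (deriv v) x := by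
  funext x
  have hξ : HasDerivAt (fun y => α ^ (1 - p) * (y - b)) (α ^ (1 - p)) x := by
    simpa using ((hasDerivAt_id x).sub_const b).const_mul (α ^ (1 - p))
  refine (((hv _).hasDerivAt.comp x hξ).const_mul α⁻¹).deriv.trans ?_
  rw [rescale]
  ring

theorem deriv_deriv_rescale (hv : Differentiable ℝ v) (hv' : Differentiable ℝ (deriv v)) :
    deriv (deriv (rescale p α b v)) =
      fun x => (α ^ (1 - p)) ^ 2 * rescale p α b (deriv (deriv v)) x := by
  rw [deriv_rescale hv, deriv_const_mul_field', deriv_rescale hv']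
  funext x
  ring

theorem abs_rpow_mul_sign_rescale (hα : 0 < α) (x : ℝ) :
    |rescale p α b v x| ^ (p - 1) * Real.sign (rescale p α b v x) =
      α ^ (1 - p) * (|v (α ^ (1 - p) * (x - b))| ^ (p - 1)
        * Real.sign (v (α ^ (1 - p) * (x - b)))) := by
  have hα' : 0 < α⁻¹ := inv_pos.mpr hα
  rw [rescale, abs_mul, abs_of_pos hα', Real.mul_rpow hα'.le (abs_nonneg _),
    Real.inv_rpow hα.le, ← Real.rpow_neg hα.le, neg_sub, Real.sign_mul_of_pos hα']
  ring

theorem burgersField_rescale (ν : ℝ) (hα : 0 < α) (hv : Differentiable ℝ v)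
    (hv' : Differentiable ℝ (deriv v)) (x : ℝ) :
    burgersField ν p (rescale p α b v) x =
      (α ^ (1 - p)) ^ 2 * rescale p α b (burgersField ν p v) x := by
  rw [burgersField, abs_rpow_mul_sign_rescale hα, deriv_deriv_rescale hv hv',
    deriv_rescale hv]
  simp only [rescale, burgersField]
  ring

theorem hasDerivAt_rescale_path {α b : ℝ → ℝ} {μ₁ μ₃ t : ℝ} (x : ℝ) (hpos : 0 < α t)
    (hα : HasDerivAt α (μ₁ * α t ^ (3 - 2 * p)) t) (hb : HasDerivAt b (μ₃ * α t ^ (1 - p)) t)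
    (hv : Differentiable ℝ v) :
    HasDerivAt (fun s => rescale p (α s) (b s) v x)
      ((α t ^ (1 - p)) ^ 2 * rescale p (α t) (b t) (scalingField p μ₁ μ₃ v) x) t := by
  have hξ := (hα.rpow_const (p := 1 - p) (Or.inl hpos.ne')).mul (hb.const_sub x)
  have hu := (hα.inv hpos.ne').mul ((hv _).hasDerivAt.comp t hξ)
  refine hu.congr_deriv ?_
  have hpow : α t ^ (3 - 2 * p) = (α t ^ (1 - p)) ^ 2 * α t := by
    rw [← Real.rpow_natCast, ← Real.rpow_mul hpos.le, ← Real.rpow_add_one hpos.ne']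
    push_cast
    ring_nf
  rw [hpow, Real.rpow_sub_one hpos.ne']
  simp only [rescale, scalingField, Function.comp_apply, Pi.mul_apply, Pi.inv_apply]
  field_simp
  ring

end Rescale

theorem rescale_path_solves_burgers {p ν μ₁ μ₃ t : ℝ} {α b : ℝ → ℝ} {v : ℝ → ℝ} (x : ℝ)
    (hpos : 0 < α t) (hα : HasDerivAt α (μ₁ * α t ^ (3 - 2 * p)) t)
    (hb : HasDerivAt b (μ₃ * α t ^ (1 - p)) t) (hv : Differentiable ℝ v)
    (hv' : Differentiable ℝ (deriv v))
    (hcomoving : burgersField ν p v = scalingField p μ₁ μ₃ v) :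
    deriv (fun s => rescale p (α s) (b s) v x) t =
      burgersField ν p (rescale p (α t) (b t) v) x := by
  rw [(hasDerivAt_rescale_path x hpos hα hb hv).deriv, burgersField_rescale ν hpos hv hv',
    hcomoving]

section SimilarityPath

variable {p μ₁ t : ℝ}

theorem simA_pos (ht : 0 < (2 * p - 2) * μ₁ * t + 1) : 0 < simA p μ₁ t :=
  Real.rpow_pos_of_pos ht _

theorem hasDerivAt_simA (hp : p ≠ 1) (ht : 0 < (2 * p - 2) * μ₁ * t + 1) :
    HasDerivAt (simA p μ₁) (μ₁ * simA p μ₁ t ^ (3 - 2 * p)) t := by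
  have hp' : 2 * p - 2 ≠ 0 := fun h => hp (by linarith)
  refine ((((hasDerivAt_id' t).const_mul ((2 * p - 2) * μ₁)).add_const 1).rpow_const
    (p := 1 / (2 * p - 2)) (Or.inl ht.ne')).congr_deriv ?_
  rw [simA, ← Real.rpow_mul ht.le,
    show 1 / (2 * p - 2) * (3 - 2 * p) = 1 / (2 * p - 2) - 1 by field_simp; ring]
  field_simp

theorem hasDerivAt_simB (μ₃ : ℝ) (hp : p ≠ 1) (hμ : μ₁ ≠ 0) (ht : 0 < (2 * p - 2) * μ₁ * t + 1) :
    HasDerivAt (simB p μ₁ μ₃) (μ₃ * simA p μ₁ t ^ (1 - p)) t := by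
  have hp' : p - 1 ≠ 0 := sub_ne_zero.mpr hp
  have ha := simA_pos ht
  refine (((((hasDerivAt_simA hp ht).rpow_const (p := p - 1) (Or.inl ha.ne')).sub_const 1).const_mul
    μ₃).div_const ((p - 1) * μ₁)).congr_deriv ?_
  have hpow : simA p μ₁ t ^ (3 - 2 * p) * simA p μ₁ t ^ (p - 1 - 1) = simA p μ₁ t ^ (1 - p) := by
    rw [← Real.rpow_add ha]
    ring_nf
  field_simp
  rw [mul_assoc, hpow]

end SimilarityPath

/-- If the profile `v̄` solves the stationary co-moving equation
`0 = ν v̄'' − |v̄|^(p−1) sgn(v̄) v̄' + μ₁(v̄ + (p−1)ξ v̄') + μ₃ v̄'`, then the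
similarity solution `u(x,t) = ᾱ(t)⁻¹ v̄(ᾱ(t)^(1−p)(x − b̄(t)))` with
`ᾱ(t) = ((2p−2)μ₁t+1)^(1/(2p−2))` and `b̄(t) = μ₃(ᾱ(t)^(p−1)−1)/((p−1)μ₁)`
satisfies `u(·,0) = v̄` and solves the generalized Burgers' equation
`u_t = ν u_xx − |u|^(p−1) sgn(u) u_x` for all `t` with `(2p−2)μ₁t + 1 > 0`. -/
theorem stmt_18 (p ν μ₁ μ₃ : ℝ) (hp : 1 < p) (hμ : μ₁ ≠ 0)
    (vbar : ℝ → ℝ) (hv : ContDiff ℝ 2 vbar)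
    (heq : ∀ ξ : ℝ,
      0 = ν * deriv (deriv vbar) ξ
        - |vbar ξ| ^ (p - 1) * Real.sign (vbar ξ) * deriv vbar ξ
        + μ₁ * (vbar ξ + (p - 1) * ξ * deriv vbar ξ) + μ₃ * deriv vbar ξ) :
    (∀ x : ℝ, simU p μ₁ μ₃ vbar x 0 = vbar x) ∧
    ∀ (x t : ℝ), 0 < (2 * p - 2) * μ₁ * t + 1 →
      deriv (fun s => simU p μ₁ μ₃ vbar x s) t =
        ν * deriv (fun y => deriv (fun y' => simU p μ₁ μ₃ vbar y' t) y) x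
          - |simU p μ₁ μ₃ vbar x t| ^ (p - 1)
            * Real.sign (simU p μ₁ μ₃ vbar x t)
            * deriv (fun y => simU p μ₁ μ₃ vbar y t) x := by
  refine ⟨fun x => by simp [simU, simA, simB], fun x t ht => ?_⟩
  have hcomoving : burgersField ν p vbar = scalingField p μ₁ μ₃ vbar := by
    funext ξ
    rw [burgersField, scalingField]
    linarith [heq ξ]
  exact rescale_path_solves_burgers x (simA_pos ht) (hasDerivAt_simA hp.ne' ht)
    (hasDerivAt_simB μ₃ hp.ne' hμ ht) (hv.differentiable (by norm_num))
    hv.differentiable_deriv_two hcomoving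
end
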